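/- arXiv:1403.7768 — 7 statements merged into one kernel-verified Lean document; each statement's English description precedes it below -/
import Mathlib

section
/- (Sierpiński) Let $\mu$ be a non-atomic finite measure on a measurable space $(X,\Sigma)$ with $\mu(X) = c$. Then there exists a map $S : [0,c] \to \Sigma$ which is monotone with respect to inclusion (i.e. $s \leq t$ implies $S(s) \subseteq S(t)$) and satisfies $\mu(S(t)) = t$ for every $t \in [0,c]$. -/
open MeasureTheory
open scoped ENNReal

/-!
Repeated use of non-atomicity builds, for every `n`, a chain of measurable sets
`g n 0 ⊆ g n 1 ⊆ ⋯ ⊆ g n (2 ^ n)` with `μ (g n k) = k c / 2 ^ n`, each level refining the previous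
one: the even-indexed sets of level `n + 1` are those of level `n`, and the odd-indexed ones are
interpolated between two consecutive sets. For `t ≤ c`, `S t` is the union over `n` of the largest
set of level `n` of measure at most `t`; these sets increase with `n` and their measures are within
`c / 2 ^ n` of `t`.
-/

namespace ENNReal

theorem natCast_two_mul_mul_div_two_pow_succ (k n : ℕ) (c : ℝ≥0∞) :
    ((2 * k : ℕ) : ℝ≥0∞) * c / 2 ^ (n + 1) = k * c / 2 ^ n := by
  rw [Nat.cast_mul, Nat.cast_ofNat, mul_assoc, pow_succ',
    ENNReal.mul_div_mul_left _ _ two_ne_zero ofNat_ne_top]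

theorem natCast_succ_mul_div (k n : ℕ) (c : ℝ≥0∞) :
    ((k + 1 : ℕ) : ℝ≥0∞) * c / 2 ^ n = k * c / 2 ^ n + c / 2 ^ n := by
  rw [Nat.cast_succ, add_mul, one_mul, ENNReal.add_div]

theorem natCast_two_pow_mul_div (n : ℕ) (c : ℝ≥0∞) : ((2 ^ n : ℕ) : ℝ≥0∞) * c / 2 ^ n = c := by
  rw [Nat.cast_pow, Nat.cast_ofNat, mul_comm, mul_div_assoc,
    ENNReal.div_self (by positivity) (pow_ne_top ofNat_ne_top), mul_one]

theorem tendsto_div_two_pow {c : ℝ≥0∞} (hc : c ≠ ∞) :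
    Filter.Tendsto (fun n : ℕ ↦ c / 2 ^ n) Filter.atTop (nhds 0) := by
  have h2 : (fun n : ℕ ↦ c / 2 ^ n) = fun n ↦ c * 2⁻¹ ^ n := by
    ext n; rw [div_eq_mul_inv, ENNReal.inv_pow]
  rw [h2]
  simpa using ENNReal.Tendsto.const_mul
    (ENNReal.tendsto_pow_atTop_nhds_zero_of_lt_one (ENNReal.inv_lt_one.2 one_lt_two)) (Or.inr hc)

/-- `⌊2 ^ n t / c⌋`, capped at `2 ^ n`. -/
noncomputable def dyadicFloor (c t : ℝ≥0∞) (n : ℕ) : ℕ :=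
  Nat.findGreatest (fun k ↦ (k : ℝ≥0∞) * c / 2 ^ n ≤ t) (2 ^ n)

variable {c s t : ℝ≥0∞} {n : ℕ}

theorem dyadicFloor_le_two_pow : dyadicFloor c t n ≤ 2 ^ n :=
  Nat.findGreatest_le _

theorem dyadicFloor_mul_div_le : (dyadicFloor c t n : ℝ≥0∞) * c / 2 ^ n ≤ t :=
  Nat.findGreatest_spec (P := fun k : ℕ ↦ (k : ℝ≥0∞) * c / 2 ^ n ≤ t) (Nat.zero_le _)
    (by simp only [Nat.cast_zero, zero_mul, ENNReal.zero_div, zero_le])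

theorem dyadicFloor_mono (hst : s ≤ t) : dyadicFloor c s n ≤ dyadicFloor c t n :=
  Nat.findGreatest_mono (fun _ hk ↦ hk.trans hst) le_rfl

theorem two_mul_dyadicFloor_le : 2 * dyadicFloor c t n ≤ dyadicFloor c t (n + 1) :=
  Nat.le_findGreatest (by rw [pow_succ']; exact Nat.mul_le_mul_left 2 dyadicFloor_le_two_pow)
    (by rw [natCast_two_mul_mul_div_two_pow_succ]; exact dyadicFloor_mul_div_le)

theorem le_dyadicFloor_mul_div_add (ht : t ≤ c) :
    t ≤ dyadicFloor c t n * c / 2 ^ n + c / 2 ^ n := by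
  obtain heq | hlt := dyadicFloor_le_two_pow (c := c) (t := t) (n := n).eq_or_lt
  · rw [heq, natCast_two_pow_mul_div]
    exact ht.trans le_self_add
  · rw [← natCast_succ_mul_div]
    exact (not_le.1 (Nat.findGreatest_is_greatest (Nat.lt_succ_self _) hlt : ¬ _)).le

theorem iSup_dyadicFloor_mul_div (hc : c ≠ ∞) (ht : t ≤ c) :
    ⨆ n, (dyadicFloor c t n : ℝ≥0∞) * c / 2 ^ n = t := by
  refine le_antisymm (iSup_le fun n ↦ dyadicFloor_mul_div_le) ?_
  set a := ⨆ n, (dyadicFloor c t n : ℝ≥0∞) * c / 2 ^ n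
  have hlim := (tendsto_div_two_pow hc).const_add a
  rw [add_zero] at hlim
  exact ge_of_tendsto' hlim fun n ↦ (le_dyadicFloor_mul_div_add ht).trans
    (by gcongr; exact le_iSup (fun n ↦ (dyadicFloor c t n : ℝ≥0∞) * c / 2 ^ n) n)

end ENNReal

namespace MeasureTheory.Measure

variable {X : Type*} [MeasurableSpace X] {μ : Measure X}

def IsNonAtomic (μ : Measure X) : Prop :=
  ∀ A : Set X, MeasurableSet A → 0 < μ A →
    ∀ t : ℝ≥0∞, 0 < t → t < μ A → ∃ B ⊆ A, MeasurableSet B ∧ μ B = t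

theorem IsNonAtomic.exists_measurableSet_between (hμ : IsNonAtomic μ) {A B : Set X}
    (hA : MeasurableSet A) (hB : MeasurableSet B) (hAB : A ⊆ B) (hB_ne_top : μ B ≠ ∞)
    {t : ℝ≥0∞} (hAt : μ A ≤ t) (htB : t ≤ μ B) :
    ∃ C, MeasurableSet C ∧ A ⊆ C ∧ C ⊆ B ∧ μ C = t := by
  obtain rfl | hAt := hAt.eq_or_lt
  · exact ⟨A, hA, subset_rfl, hAB, rfl⟩
  obtain rfl | htB := htB.eq_or_lt
  · exact ⟨B, hB, hAB, subset_rfl, rfl⟩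
  have hA_ne_top : μ A ≠ ∞ := ne_top_of_le_ne_top hB_ne_top (measure_mono hAB)
  have hdiff : μ (B \ A) = μ B - μ A := measure_sdiff hAB hA.nullMeasurableSet hA_ne_top
  obtain ⟨D, hDBA, hD, hμD⟩ := hμ (B \ A) (hB.diff hA) (by simpa [hdiff] using hAt.trans htB)
    (t - μ A) (tsub_pos_of_lt hAt)
    (hdiff ▸ (ENNReal.cancel_of_ne hA_ne_top).tsub_lt_tsub_right_of_le hAt.le htB)
  refine ⟨A ∪ D, hA.union hD, Set.subset_union_left,
    Set.union_subset hAB (hDBA.trans Set.sdiff_subset), ?_⟩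
  rw [measure_union (Set.disjoint_of_subset_right hDBA Set.disjoint_sdiff_right) hD, hμD,
    add_tsub_cancel_of_le hAt.le]

theorem IsNonAtomic.exists_interleave (hμ : IsNonAtomic μ) [IsFiniteMeasure μ]
    {f : ℕ → Set X} (hf : ∀ k, MeasurableSet (f k)) (hf_mono : Monotone f) {v : ℕ → ℝ≥0∞}
    (hv : ∀ k, μ (f k) ≤ v k ∧ v k ≤ μ (f (k + 1))) :
    ∃ g : ℕ → Set X, (∀ k, MeasurableSet (g k)) ∧ Monotone g ∧
      (∀ k, g (2 * k) = f k) ∧ ∀ k, μ (g (2 * k + 1)) = v k := by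
  choose C hC hfC hCf hμC using fun k ↦ hμ.exists_measurableSet_between (hf k) (hf (k + 1))
    (hf_mono k.le_succ) (measure_ne_top μ _) (hv k).1 (hv k).2
  set g : ℕ → Set X := fun k ↦ if Even k then f (k / 2) else C (k / 2)
  have hg_even (k : ℕ) : g (2 * k) = f k := by simp [g]
  have hg_odd (k : ℕ) : g (2 * k + 1) = C k := by simp [g]; congr 1; omega
  refine ⟨g, fun k ↦ ?_, monotone_nat_of_le_succ fun k ↦ ?_, hg_even, fun k ↦ ?_⟩
  · obtain ⟨m, rfl | rfl⟩ := Nat.even_or_odd' k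
    · exact hg_even m ▸ hf m
    · exact hg_odd m ▸ hC m
  · obtain ⟨m, rfl | rfl⟩ := Nat.even_or_odd' k
    · rw [hg_even, hg_odd]; exact hfC m
    · rw [hg_odd, show 2 * m + 1 + 1 = 2 * (m + 1) by ring, hg_even]; exact hCf m
  · rw [hg_odd, hμC]

/-- The `min` lets level `n` continue past index `2 ^ n` with sets of full measure, so that
every level is a chain indexed by all of `ℕ`. -/
structure IsDyadicChain (μ : Measure X) (c : ℝ≥0∞) (g : ℕ → ℕ → Set X) : Prop where
  measurableSet (n k : ℕ) : MeasurableSet (g n k)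
  monotone (n : ℕ) : Monotone (g n)
  refine (n k : ℕ) : g (n + 1) (2 * k) = g n k
  measure_eq (n k : ℕ) : μ (g n k) = min (k * c / 2 ^ n) c

theorem IsNonAtomic.exists_isDyadicChain (hμ : IsNonAtomic μ) [IsFiniteMeasure μ] :
    ∃ g, IsDyadicChain μ (μ Set.univ) g := by
  set c := μ Set.univ
  let IsLevel (n : ℕ) (f : ℕ → Set X) : Prop :=
    (∀ k, MeasurableSet (f k)) ∧ Monotone f ∧ ∀ k, μ (f k) = min (k * c / 2 ^ n) c
  have base : IsLevel 0 fun k ↦ if k = 0 then ∅ else Set.univ := by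
    refine ⟨fun k ↦ by dsimp only; split_ifs <;> simp, fun a b hab ↦ ?_, fun k ↦ ?_⟩ <;>
      dsimp only
    · split_ifs <;> first | omega | simp
    · split_ifs with hk
      · simp [hk]
      · have hk1 : (1 : ℝ≥0∞) ≤ k := by exact_mod_cast Nat.one_le_iff_ne_zero.2 hk
        rw [pow_zero, div_one, min_eq_right (le_mul_of_one_le_left zero_le hk1)]
  have step (n : ℕ) (f : ℕ → Set X) (hf : IsLevel n f) :
      ∃ f', IsLevel (n + 1) f' ∧ ∀ k, f' (2 * k) = f k := by
    obtain ⟨hf, hf_mono, hμf⟩ := hf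
    obtain ⟨f', hf', hf'_mono, heven, hodd⟩ := hμ.exists_interleave hf hf_mono
      (v := fun k ↦ min (((2 * k + 1 : ℕ) : ℝ≥0∞) * c / 2 ^ (n + 1)) c) fun k ↦ by
        rw [hμf, hμf, ← ENNReal.natCast_two_mul_mul_div_two_pow_succ,
          ← ENNReal.natCast_two_mul_mul_div_two_pow_succ (k + 1)]
        constructor <;> gcongr <;> omega
    refine ⟨f', ⟨hf', hf'_mono, fun k ↦ ?_⟩, heven⟩
    obtain ⟨m, rfl | rfl⟩ := Nat.even_or_odd' k
    · rw [heven, hμf, ENNReal.natCast_two_mul_mul_div_two_pow_succ]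
    · rw [hodd]
  choose! next hnext hnext_even using step
  let g (n : ℕ) : ℕ → Set X := Nat.rec (fun k ↦ if k = 0 then ∅ else Set.univ) next n
  have hg (n : ℕ) : IsLevel n (g n) := by
    induction n with
    | zero => exact base
    | succ n ih => exact hnext n _ ih
  exact ⟨g, fun n ↦ (hg n).1, fun n ↦ (hg n).2.1, fun n ↦ hnext_even n _ (hg n),
    fun n ↦ (hg n).2.2⟩

open ENNReal in
theorem IsDyadicChain.exists_monotone_measure_eq {c : ℝ≥0∞} {g : ℕ → ℕ → Set X}
    (hg : IsDyadicChain μ c g) (hc : c ≠ ∞) :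
    ∃ S : ℝ≥0∞ → Set X, (∀ t, MeasurableSet (S t)) ∧ Monotone S ∧ ∀ t ≤ c, μ (S t) = t := by
  refine ⟨fun t ↦ ⋃ n, g n (dyadicFloor c t n), fun t ↦ .iUnion fun n ↦ hg.measurableSet _ _,
    fun s t hst ↦ Set.iUnion_mono fun n ↦ hg.monotone n (dyadicFloor_mono hst), fun t ht ↦ ?_⟩
  have hmono : Monotone fun n ↦ g n (dyadicFloor c t n) :=
    monotone_nat_of_le_succ fun n ↦ hg.refine n _ ▸ hg.monotone (n + 1) two_mul_dyadicFloor_le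
  have hμ_floor (n : ℕ) : μ (g n (dyadicFloor c t n)) = dyadicFloor c t n * c / 2 ^ n := by
    rw [hg.measure_eq, min_eq_left (dyadicFloor_mul_div_le.trans ht)]
  simp_rw [hmono.measure_iUnion, hμ_floor]
  exact iSup_dyadicFloor_mul_div hc ht

end MeasureTheory.Measure

/-- **Sierpiński.** If `μ` is a non-atomic finite measure on a measurable space `X` with
total mass `c = μ X`, then there is a map `S` from `[0, c]` to measurable sets which is
monotone with respect to inclusion and satisfies `μ (S t) = t` for every `t ∈ [0, c]`. -/
theorem stmt3 {X : Type*} [MeasurableSpace X] (μ : Measure X) [IsFiniteMeasure μ]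
    (hna : ∀ A : Set X, MeasurableSet A → 0 < μ A →
      ∀ t : ℝ≥0∞, 0 < t → t < μ A → ∃ B ⊆ A, MeasurableSet B ∧ μ B = t) :
    ∃ S : ℝ≥0∞ → Set X,
      (∀ t, t ≤ μ Set.univ → MeasurableSet (S t)) ∧
      (∀ s t, s ≤ t → t ≤ μ Set.univ → S s ⊆ S t) ∧
      (∀ t, t ≤ μ Set.univ → μ (S t) = t) := by
  obtain ⟨g, hg⟩ := Measure.IsNonAtomic.exists_isDyadicChain (μ := μ) hna
  obtain ⟨S, hS, hS_mono, hμS⟩ := hg.exists_monotone_measure_eq (measure_ne_top μ _)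
  exact ⟨S, fun t _ ↦ hS t, fun s t hst _ ↦ hS_mono hst, hμS⟩
end

section
/- Let $\mu$ be a non-atomic Radon measure with $\mu \neq 0$ and let $1 \leq p < \infty$. Then $L^p(\mu)$ is not finitely generated as a module over $L^\infty(\mu)$: for any $f_1, \dots, f_N \in L^p(\mu)$ there exists $g \in L^p(\mu)$ which cannot be written as $g = \sum_{i=1}^N \lambda_i f_i$ with $\lambda_1,\dots,\lambda_N \in L^\infty(\mu)$. -/
open MeasureTheory Set
open scoped ENNReal

/-!
On a set `A` of positive finite measure on which every `fᵢ` is bounded, every combination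
`∑ λᵢ fᵢ` with `λᵢ ∈ L^∞` is essentially bounded. Since `μ` is regular and kills points, `A`
contains subsets `Bₙ` of arbitrarily small positive measure (a compact subset of `A` of positive
measure cannot be covered by open sets of small measure that meet `A` in null sets). A function
`g ≥ n + 1` on `Bₙ`, with `μ Bₙ` small enough, lies in `L^p` but is essentially unbounded on `A`.
-/

section

variable {X : Type*} [MeasurableSpace X] {μ : Measure X}

theorem exists_subset_measure_ne_zero_le [TopologicalSpace X] [OpensMeasurableSpace X]
    [μ.OuterRegular] [μ.InnerRegularCompactLTTop] [NullSingletonClass μ] {s : Set X}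
    (hs : MeasurableSet s) (hs₀ : μ s ≠ 0) (hs_top : μ s ≠ ∞) {ε : ℝ≥0∞} (hε : ε ≠ 0) :
    ∃ t ⊆ s, MeasurableSet t ∧ μ t ≠ 0 ∧ μ t ≤ ε := by
  by_contra! h
  obtain ⟨K, hKs, hK, hK₀⟩ := hs.exists_lt_isCompact_of_ne_top hs_top (pos_iff_ne_zero.2 hs₀)
  refine hK₀.ne' (hK.measure_zero_of_nhdsWithin fun a _ ↦ ?_)
  obtain ⟨U, haU, hU, hUε⟩ :=
    Set.exists_isOpen_lt_of_lt (μ := μ) {a} ε (by simpa using pos_iff_ne_zero.2 hε)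
  refine ⟨K ∩ U, inter_mem_nhdsWithin K (hU.mem_nhds (haU rfl)),
    measure_mono_null (inter_subset_inter_left U hKs) ?_⟩
  by_contra hne
  exact (h _ inter_subset_left (hs.inter hU.measurableSet) hne).not_gt
    ((measure_mono inter_subset_right).trans_lt hUε)

theorem exists_measure_inter_setOf_forall_abs_le_ne_zero {ι : Type*} [Finite ι] {T : Set X}
    (hT : μ T ≠ 0) (f : ι → X → ℝ) : ∃ M : ℕ, μ (T ∩ {x | ∀ i, |f i x| ≤ M}) ≠ 0 := by
  have hcover : T ⊆ ⋃ M : ℕ, T ∩ {x | ∀ i, |f i x| ≤ M} := fun x hx ↦ by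
    obtain ⟨C, hC⟩ := Finite.exists_le fun i ↦ |f i x|
    obtain ⟨M, hM⟩ := exists_nat_ge C
    exact mem_iUnion.2 ⟨M, hx, fun i ↦ (hC i).trans hM⟩
  obtain ⟨M, hM⟩ :=
    exists_measure_pos_of_not_measure_iUnion_null fun h ↦ hT (measure_mono_null hcover h)
  exact ⟨M, hM.ne'⟩

theorem memLp_toReal_rpow_inv {H : X → ℝ≥0∞} (hH : Measurable H) (hH_int : ∫⁻ x, H x ∂μ ≠ ∞)
    {p : ℝ≥0∞} (hp₀ : p ≠ 0) (hp : p ≠ ∞) :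
    MemLp (fun x ↦ (H x ^ p.toReal⁻¹).toReal) p μ := by
  refine ⟨(hH.pow_const _).ennreal_toReal.aestronglyMeasurable,
    (eLpNorm_lt_top_iff_lintegral_rpow_enorm_lt_top hp₀ hp).2 (lt_of_le_of_lt ?_ hH_int.lt_top)⟩
  refine lintegral_mono fun x ↦ ?_
  calc ‖(H x ^ p.toReal⁻¹).toReal‖ₑ ^ p.toReal ≤ (H x ^ p.toReal⁻¹) ^ p.toReal := by
        gcongr
        rw [Real.enorm_eq_ofReal ENNReal.toReal_nonneg]
        exact ENNReal.ofReal_toReal_le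
    _ = H x := ENNReal.rpow_inv_rpow (ENNReal.toReal_pos hp₀ hp).ne' _

theorem exists_memLp_not_memLp_top_indicator {p : ℝ≥0∞} (hp₀ : p ≠ 0) (hp : p ≠ ∞) {s : Set X}
    (hs : ∀ ε ≠ 0, ∃ t ⊆ s, MeasurableSet t ∧ μ t ≠ 0 ∧ μ t ≤ ε) :
    ∃ g : X → ℝ, MemLp g p μ ∧ ¬ MemLp (s.indicator g) ∞ μ := by
  set r := p.toReal
  have hr : 0 < r := ENNReal.toReal_pos hp₀ hp
  have hc : ∀ n : ℕ, ((n : ℝ≥0∞) + 1) ^ r ≠ ∞ := fun n ↦ by finiteness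
  choose B hBs hBm hB₀ hB_le using fun n : ℕ ↦
    hs (2⁻¹ ^ n / ((n : ℝ≥0∞) + 1) ^ r) (by simp [ENNReal.div_eq_zero_iff, hc])
  -- `H ≥ (n + 1) ^ r` on `B n`, while `μ (B n)` is small enough to keep `∫⁻ H ≤ ∑ 2⁻¹ ^ n`.
  set H : X → ℝ≥0∞ := fun x ↦ ∑' n : ℕ, (B n).indicator (fun _ ↦ ((n : ℝ≥0∞) + 1) ^ r) x
  have hH : Measurable H := Measurable.tsum fun n ↦ measurable_const.indicator (hBm n)
  have hH_int : ∫⁻ x, H x ∂μ ≠ ∞ := by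
    rw [lintegral_tsum fun n ↦ (measurable_const.indicator (hBm n)).aemeasurable]
    refine ne_top_of_le_ne_top (by simp) (ENNReal.tsum_le_tsum (g := fun n ↦ 2⁻¹ ^ n) fun n ↦ ?_)
    rw [lintegral_indicator_const (hBm n)]
    calc _ ≤ ((n : ℝ≥0∞) + 1) ^ r * (2⁻¹ ^ n / ((n : ℝ≥0∞) + 1) ^ r) := by gcongr; exact hB_le n
      _ = 2⁻¹ ^ n := ENNReal.mul_div_cancel (by positivity) (hc n)
  refine ⟨_, memLp_toReal_rpow_inv hH hH_int hp₀ hp, fun hg_top ↦ ?_⟩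
  obtain ⟨n, hn⟩ := ENNReal.exists_nat_gt hg_top.eLpNorm_lt_top.ne
  refine hB₀ n (measure_eq_zero_iff_ae_notMem.2 ?_)
  filter_upwards [ae_le_eLpNormEssSup (f := s.indicator fun x ↦ (H x ^ r⁻¹).toReal) (μ := μ),
    ae_lt_top hH hH_int] with x hx_le hx_top hxB
  have hHx : (n : ℝ≥0∞) + 1 ≤ H x ^ r⁻¹ := calc
    (n : ℝ≥0∞) + 1 = (((n : ℝ≥0∞) + 1) ^ r) ^ r⁻¹ := (ENNReal.rpow_rpow_inv hr.ne' _).symm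
    _ ≤ H x ^ r⁻¹ := by
      gcongr
      simpa [hxB] using ENNReal.le_tsum (f := fun n ↦ (B n).indicator (fun _ ↦ _) x) n
  rw [indicator_of_mem (hBs n hxB), Real.enorm_toReal (by finiteness)] at hx_le
  rw [eLpNorm_exponent_top] at hn
  exact (hn.trans_le le_self_add).not_ge (hHx.trans hx_le)

end

/-- If `μ` is a nonzero non-atomic Radon measure and `1 ≤ p < ∞`, then `L^p(μ)` is not
finitely generated as a module over `L^∞(μ)`: for any `f₁, …, f_N ∈ L^p(μ)` there is
`g ∈ L^p(μ)` which is not of the form `∑ i, λᵢ fᵢ` with `λᵢ ∈ L^∞(μ)`. -/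
theorem stmt4 {X : Type*} [TopologicalSpace X] [MeasurableSpace X] [BorelSpace X]
    (μ : Measure X) [μ.Regular] [NullSingletonClass μ] (hμ : μ ≠ 0)
    (p : ℝ≥0∞) (hp : 1 ≤ p) (hp' : p ≠ ∞)
    (N : ℕ) (f : Fin N → Lp ℝ p μ) :
    ∃ g : Lp ℝ p μ,
      ¬ ∃ lam : Fin N → X → ℝ,
          (∀ i, MemLp (lam i) ∞ μ) ∧
          (⇑g : X → ℝ) =ᵐ[μ] fun x => ∑ i, lam i x * (f i : X → ℝ) x := by
  obtain ⟨K, hK, hK₀⟩ := Measure.Regular.exists_isCompact_not_null.2 hμ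
  obtain ⟨M, hM⟩ := exists_measure_inter_setOf_forall_abs_le_ne_zero
    (by rwa [measure_toMeasurable]) fun i ↦ ⇑(f i)
  set A := toMeasurable μ K ∩ {x | ∀ i, |f i x| ≤ M}
  have hA : MeasurableSet A := (measurableSet_toMeasurable μ K).inter <| by
    simpa only [ofPred_forall] using .iInter fun i ↦
      measurableSet_le (Lp.stronglyMeasurable (f i)).measurable.abs measurable_const
  have hA_top : μ A ≠ ∞ := ne_top_of_le_ne_top
    (by rw [measure_toMeasurable]; exact hK.measure_ne_top) (measure_mono inter_subset_left)
  obtain ⟨g, hg, hg_top⟩ := exists_memLp_not_memLp_top_indicator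
    (zero_lt_one.trans_le hp).ne' hp' fun ε hε ↦ exists_subset_measure_ne_zero_le hA hM hA_top hε
  refine ⟨hg.toLp g, fun ⟨lam, hlam, hg_eq⟩ ↦ hg_top ?_⟩
  have hfA : ∀ i, MemLp (A.indicator (f i)) ∞ μ := fun i ↦
    memLp_top_of_bound ((Lp.aestronglyMeasurable (f i)).indicator hA) M <| .of_forall fun x ↦ by
      by_cases hx : x ∈ A
      · simpa [hx] using hx.2 i
      · simp [hx]
  refine (memLp_finsetSum Finset.univ fun i _ ↦ (hfA i).mul' (hlam i)).ae_eq ?_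
  filter_upwards [hg.coeFn_toLp, hg_eq] with x hgx hx
  by_cases hxA : x ∈ A <;> simp [hxA, ← hgx, hx]
end

section
/- Let $\mu$ be a non-atomic finite measure and $1 \leq p < \infty$. Then every bounded $L^\infty(\mu)$-module homomorphism $\Phi : L^p(\mu) \to L^\infty(\mu)$ is identically zero. -/
open MeasureTheory
open scoped ENNReal

/-!
If `Φ f ≠ 0`, then `|Φ f| > ‖Φ f‖ / 2` on a set `A` of positive measure. Non-atomicity gives a
subset `B ⊆ A` of positive but arbitrarily small measure, so that `‖1_B f‖_p` is as small as we
like by absolute continuity of the `L^p` norm. The module property gives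
`Φ (1_B f) = 1_B Φ f`, whose sup norm is at least `‖Φ f‖ / 2`, contradicting the boundedness of `Φ`.
-/

namespace MeasureTheory

variable {X E : Type*} [MeasurableSpace X] {μ : Measure X} [NormedAddCommGroup E]

namespace Lp

theorem ae_norm_le_norm_top (h : Lp E ∞ μ) : ∀ᵐ x ∂μ, ‖h x‖ ≤ ‖h‖ := by
  rw [Lp.norm_def, toReal_eLpNorm (Lp.aestronglyMeasurable h)]
  exact ae_le_lpNorm_exponent_top (Lp.memLp h)

theorem le_norm_top_of_ae_mem {h : Lp E ∞ μ} {B : Set X} {r : ℝ} (hB : μ B ≠ 0)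
    (hr : ∀ᵐ x ∂μ, x ∈ B → r ≤ ‖h x‖) : r ≤ ‖h‖ := by
  by_contra! hlt
  refine hB (measure_eq_zero_iff_ae_notMem.2 ?_)
  filter_upwards [hr, ae_norm_le_norm_top h] with x hx hle hxB
  linarith [hx hxB]

theorem measure_norm_gt_pos {h : Lp E ∞ μ} {r : ℝ} (hr₀ : 0 ≤ r) (hr : r < ‖h‖) :
    0 < μ {x | r < ‖h x‖} := by
  refine pos_iff_ne_zero.2 fun hnull => hr.not_ge ?_
  have hbound : ∀ᵐ x ∂μ, ‖h x‖ ≤ r := by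
    filter_upwards [measure_eq_zero_iff_ae_notMem.1 hnull] with x hx
    exact not_lt.1 hx
  rw [Lp.norm_def, eLpNorm_exponent_top]
  exact ENNReal.toReal_le_of_le_ofReal hr₀ (eLpNormEssSup_le_of_ae_bound hbound)

end Lp

theorem MemLp.exists_subset_eLpNorm_indicator_le
    (hna : ∀ A : Set X, MeasurableSet A → 0 < μ A →
      ∀ t : ℝ≥0∞, 0 < t → t < μ A → ∃ B ⊆ A, MeasurableSet B ∧ μ B = t)
    {p : ℝ≥0∞} (hp₁ : 1 ≤ p) (hp : p ≠ ∞) {f : X → E} (hf : MemLp f p μ)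
    {A : Set X} (hA : MeasurableSet A) (hμA : 0 < μ A) {ε : ℝ} (hε : 0 < ε) :
    ∃ B ⊆ A, MeasurableSet B ∧ 0 < μ B ∧ eLpNorm (B.indicator f) p μ ≤ ENNReal.ofReal ε := by
  obtain ⟨δ, hδ, hsmall⟩ := hf.eLpNorm_indicator_le hp₁ hp hε
  obtain ⟨t, ht₀, ht⟩ := exists_between (lt_min (ENNReal.ofReal_pos.2 hδ) hμA)
  obtain ⟨B, hBA, hB, rfl⟩ := hna A hA hμA t ht₀ (ht.trans_le (min_le_right _ _))
  exact ⟨B, hBA, hB, ht₀, hsmall B hB (ht.le.trans (min_le_left _ _))⟩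

theorem apply_ae_eq_indicator_of_ae_eq_indicator {p : ℝ≥0∞} {Φ : Lp ℝ p μ → Lp ℝ ∞ μ}
    (hmod : ∀ (lam : X → ℝ), MemLp lam ∞ μ → ∀ f g : Lp ℝ p μ,
      (⇑g : X → ℝ) =ᵐ[μ] (fun x => lam x * (f : X → ℝ) x) →
      (⇑(Φ g) : X → ℝ) =ᵐ[μ] fun x => lam x * (Φ f : X → ℝ) x)
    {B : Set X} (hB : MeasurableSet B) {f g : Lp ℝ p μ} (hg : (g : X → ℝ) =ᵐ[μ] B.indicator f) :
    (Φ g : X → ℝ) =ᵐ[μ] B.indicator (Φ f) := by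
  have hlam : MemLp (B.indicator 1) ∞ μ := (memLp_top_const (1 : ℝ)).indicator hB
  refine (hmod _ hlam f g ?_).trans (ae_of_all _ fun x => ?_)
  · filter_upwards [hg] with x hx
    simp only [hx, ← Set.indicator_mul_left, Pi.one_apply, one_mul]
  · simp only [← Set.indicator_mul_left, Pi.one_apply, one_mul]

end MeasureTheory

theorem stmt5_general {X : Type*} [MeasurableSpace X] (μ : Measure X)
    (hna : ∀ A : Set X, MeasurableSet A → 0 < μ A →
      ∀ t : ℝ≥0∞, 0 < t → t < μ A → ∃ B ⊆ A, MeasurableSet B ∧ μ B = t)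
    (p : ℝ≥0∞) [Fact (1 ≤ p)] (hp' : p ≠ ∞)
    (Φ : Lp ℝ p μ →L[ℝ] Lp ℝ ∞ μ)
    (hmod : ∀ (lam : X → ℝ), MemLp lam ∞ μ → ∀ f g : Lp ℝ p μ,
      (⇑g : X → ℝ) =ᵐ[μ] (fun x => lam x * (f : X → ℝ) x) →
      (⇑(Φ g) : X → ℝ) =ᵐ[μ] fun x => lam x * (Φ f : X → ℝ) x) :
    Φ = 0 := by
  ext1 f
  rw [zero_apply]
  by_contra hne
  set c := ‖Φ f‖
  have hc : 0 < c := norm_pos_iff.2 hne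
  set ε := c / (2 * (‖Φ‖ + 1))
  have hε : 0 < ε := by positivity
  have hA : MeasurableSet {x | c / 2 < ‖Φ f x‖} :=
    measurableSet_lt measurable_const (Lp.stronglyMeasurable _).measurable.norm
  have hμA := Lp.measure_norm_gt_pos (half_pos hc).le (half_lt_self hc)
  obtain ⟨B, hBA, hB, hμB, hfB⟩ :=
    (Lp.memLp f).exists_subset_eLpNorm_indicator_le hna Fact.out hp' hA hμA hε
  obtain ⟨g, hg⟩ : ∃ g : Lp ℝ p μ, (g : X → ℝ) =ᵐ[μ] B.indicator f :=
    ⟨((Lp.memLp f).indicator hB).toLp _, MemLp.coeFn_toLp _⟩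
  have hg_norm : ‖g‖ ≤ ε := by
    rw [Lp.norm_def, eLpNorm_congr_ae hg]
    exact ENNReal.toReal_le_of_le_ofReal hε.le hfB
  have hΦg := apply_ae_eq_indicator_of_ae_eq_indicator hmod hB hg
  have hupper : ‖Φ g‖ < c / 2 := calc
    ‖Φ g‖ ≤ ‖Φ‖ * ε := Φ.le_opNorm_of_le hg_norm
    _ < (‖Φ‖ + 1) * ε := by gcongr; linarith
    _ = c / 2 := by simp only [ε]; field_simp
  have hlower : c / 2 ≤ ‖Φ g‖ := Lp.le_norm_top_of_ae_mem hμB.ne' <| by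
    filter_upwards [hΦg] with x hx hxB
    rw [hx, Set.indicator_of_mem hxB]
    exact (hBA hxB).le
  linarith

/-- If `μ` is a non-atomic finite measure and `1 ≤ p < ∞`, then every bounded
`L^∞(μ)`-module homomorphism `Φ : L^p(μ) → L^∞(μ)` is identically zero.  The module
homomorphism property is expressed pointwise: if `g = λ · f` a.e. with `λ ∈ L^∞(μ)`,
then `Φ g = λ · Φ f` a.e. -/
theorem stmt5 {X : Type*} [MeasurableSpace X] (μ : Measure X) [IsFiniteMeasure μ]
    (hna : ∀ A : Set X, MeasurableSet A → 0 < μ A →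
      ∀ t : ℝ≥0∞, 0 < t → t < μ A → ∃ B ⊆ A, MeasurableSet B ∧ μ B = t)
    (p : ℝ≥0∞) [Fact (1 ≤ p)] (hp' : p ≠ ∞)
    (Φ : Lp ℝ p μ →L[ℝ] Lp ℝ ∞ μ)
    (hmod : ∀ (lam : X → ℝ), MemLp lam ∞ μ → ∀ f g : Lp ℝ p μ,
      (⇑g : X → ℝ) =ᵐ[μ] (fun x => lam x * (f : X → ℝ) x) →
      (⇑(Φ g) : X → ℝ) =ᵐ[μ] fun x => lam x * (Φ f : X → ℝ) x) :
    Φ = 0 :=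
  stmt5_general μ hna p hp' Φ hmod
end

section
/- Let $\mu$ be a measure, $1 \leq p < \infty$, $k \geq 2$, and let $N$ be a Banach space which is an $L^\infty(\mu)$-module. Then every bounded alternating $L^\infty(\mu)$-multilinear map $T : (L^p(\mu))^k \to N$ is identically zero. -/
/-!
Bounded functions supported on a set of finite measure (here: simple functions) are dense in
`L^p(μ)`, and any finitely many of them can be written as `fᵢ = sᵢ χ_E` with `sᵢ ∈ L^∞(μ)` and
one common indicator `χ_E ∈ L^p(μ)`. Pulling out the factors `sᵢ` one slot at a time turns
`T (f₁, …, f_k)` into `s₁ ⋯ s_k · T (χ_E, …, χ_E)`, which vanishes because `T` is alternating.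
The bound on `T` makes it continuous in each slot, so vanishing on the dense set propagates to
all of `(L^p(μ))^k`, again one slot at a time.
-/

open MeasureTheory Function
open scoped ENNReal

section SlotwiseContinuity

variable {ι E N : Type*} [Fintype ι] [DecidableEq ι]

theorem continuous_update_of_bound [SeminormedAddCommGroup E] [SeminormedAddCommGroup N]
    {T : (ι → E) → N}
    (hT_add : ∀ (f : ι → E) (i : ι) (g h : E),
      T (update f i (g + h)) = T (update f i g) + T (update f i h))
    {C : ℝ} (hC : ∀ f : ι → E, ‖T f‖ ≤ C * ∏ i, ‖f i‖) (f : ι → E) (i : ι) :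
    Continuous fun g => T (update f i g) := by
  let L : E →+ N := AddMonoidHom.mk' (fun g => T (update f i g)) (hT_add f i)
  refine AddMonoidHomClass.continuous_of_bound L (C * ∏ j ∈ {i}ᶜ, ‖f j‖) fun g => ?_
  have hprod : ∏ j, ‖update f i g j‖ = ‖g‖ * ∏ j ∈ {i}ᶜ, ‖f j‖ := by
    rw [Fintype.prod_eq_mul_prod_compl i, update_self]
    congr 1
    refine Finset.prod_congr rfl fun j hj => ?_
    rw [update_of_ne (by simpa using hj)]
  calc ‖L g‖ ≤ C * ∏ j, ‖update f i g j‖ := hC _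
    _ = C * (∏ j ∈ {i}ᶜ, ‖f j‖) * ‖g‖ := by rw [hprod]; ring

theorem eq_zero_of_dense_of_continuous_update [TopologicalSpace E] [TopologicalSpace N]
    [T2Space N] [Zero N] {T : (ι → E) → N}
    (hT_cont : ∀ (f : ι → E) (i : ι), Continuous fun g => T (update f i g))
    {S : Set E} (hS : Dense S) (hT_S : ∀ f : ι → E, (∀ i, f i ∈ S) → T f = 0)
    (f : ι → E) : T f = 0 := by
  suffices ∀ s : Finset ι, ∀ f : ι → E, (∀ i ∉ s, f i ∈ S) → T f = 0 from
    this Finset.univ f fun i hi => absurd (Finset.mem_univ i) hi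
  intro s
  induction s using Finset.induction_on with
  | empty => exact fun f hf => hT_S f fun i => hf i (Finset.notMem_empty i)
  | insert a s _ ih =>
    intro f hf
    have h_on_S : Set.EqOn (fun g => T (update f a g)) (fun _ => 0) S := fun g hg => by
      refine ih _ fun i hi => ?_
      rcases eq_or_ne i a with rfl | hia
      · rwa [update_self]
      · rw [update_of_ne hia]
        exact hf i (by simp [hia, hi])
    simpa using congrFun (Continuous.ext_on hS (hT_cont f a) continuous_const h_on_S) (f a)

end SlotwiseContinuity

section LpSpace

variable {X : Type*} [MeasurableSpace X] {μ : Measure X} {p : ℝ≥0∞}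

theorem Lp.exists_common_factor_of_mem_simpleFunc {ι : Type*} [Fintype ι] (hp0 : p ≠ 0)
    (hp : p ≠ ∞) {f : ι → Lp ℝ p μ} (hf : ∀ i, f i ∈ Lp.simpleFunc ℝ p μ) :
    ∃ χ : Lp ℝ p μ, ∀ i, ∃ s : X → ℝ, MemLp s ∞ μ ∧
      (f i : X → ℝ) =ᵐ[μ] fun x => s x * (χ : X → ℝ) x := by
  let s i : SimpleFunc X ℝ := Lp.simpleFunc.toSimpleFunc ⟨f i, hf i⟩
  have hs i : s i =ᵐ[μ] f i := Lp.simpleFunc.toSimpleFunc_eq_toFun ⟨f i, hf i⟩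
  let E := ⋃ i, support (s i)
  have hE : MeasurableSet E := .iUnion fun i => (s i).measurableSet_support
  have hμE : μ E ≠ ∞ := ((measure_iUnion_fintype_le μ _).trans_lt <| ENNReal.sum_lt_top.mpr
    fun i _ => (s i).measure_support_lt_top_of_memLp ((Lp.memLp (f i)).ae_eq (hs i).symm) hp0 hp).ne
  refine ⟨indicatorConstLp p hE hμE 1, fun i => ⟨s i, (s i).memLp_top μ, ?_⟩⟩
  filter_upwards [hs i, indicatorConstLp_coeFn (hs := hE) (hμs := hμE) (c := (1 : ℝ))]
    with x hsx hχx
  have hsupp : support (s i) ⊆ E := Set.subset_iUnion (fun i => support (s i)) i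
  rw [hχx, ← hsx, ← Set.indicator_mul_right]
  simp only [mul_one, Set.indicator_eq_self.mpr hsupp]


theorem eq_zero_of_forall_ae_eq_mul {ι N : Type*} [Fintype ι] [DecidableEq ι] [Nontrivial ι]
    [Zero N] {A : (X → ℝ) → N → N} (hA_zero : ∀ lam : X → ℝ, A lam 0 = 0)
    {T : (ι → Lp ℝ p μ) → N}
    (hT_smul : ∀ (f : ι → Lp ℝ p μ) (i : ι) (lam : X → ℝ), MemLp lam ∞ μ →
      ∀ g : Lp ℝ p μ, (⇑g : X → ℝ) =ᵐ[μ] (fun x => lam x * (f i : X → ℝ) x) →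
      T (update f i g) = A lam (T f))
    (hT_alt : ∀ (f : ι → Lp ℝ p μ) (i j : ι), i ≠ j → f i = f j → T f = 0)
    {f : ι → Lp ℝ p μ} {χ : Lp ℝ p μ}
    (hf : ∀ i, ∃ s : X → ℝ, MemLp s ∞ μ ∧ (f i : X → ℝ) =ᵐ[μ] fun x => s x * (χ : X → ℝ) x) :
    T f = 0 := by
  suffices ∀ s : Finset ι, T (s.piecewise f fun _ => χ) = 0 by
    simpa using this Finset.univ
  intro s
  induction s using Finset.induction_on with
  | empty =>
    obtain ⟨i, j, hij⟩ := exists_pair_ne ι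
    exact hT_alt _ i j hij rfl
  | insert a s ha ih =>
    obtain ⟨lam, hlam, hfa⟩ := hf a
    rw [Finset.piecewise_insert, hT_smul _ a lam hlam (f a), ih, hA_zero]
    rwa [Finset.piecewise_eq_of_notMem _ _ _ ha]

end LpSpace

theorem stmt6_general {X : Type*} [MeasurableSpace X] (μ : Measure X)
    (p : ℝ≥0∞) [Fact (1 ≤ p)] (hp' : p ≠ ∞) (k : ℕ) (hk : 2 ≤ k)
    {N : Type*} [NormedAddCommGroup N]
    -- the `L^∞(μ)`-module structure on `N`:
    (A : (X → ℝ) → N → N)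
    (hA_add : ∀ lam : X → ℝ, ∀ n m, A lam (n + m) = A lam n + A lam m)
    -- the alternating `L^∞(μ)`-multilinear map:
    (T : (Fin k → Lp ℝ p μ) → N)
    (hT_add : ∀ (f : Fin k → Lp ℝ p μ) (i : Fin k) (g h : Lp ℝ p μ),
      T (Function.update f i (g + h)) =
        T (Function.update f i g) + T (Function.update f i h))
    (hT_smul : ∀ (f : Fin k → Lp ℝ p μ) (i : Fin k) (lam : X → ℝ), MemLp lam ∞ μ →
      ∀ g : Lp ℝ p μ, (⇑g : X → ℝ) =ᵐ[μ] (fun x => lam x * (f i : X → ℝ) x) →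
      T (Function.update f i g) = A lam (T f))
    (hT_alt : ∀ (f : Fin k → Lp ℝ p μ) (i j : Fin k), i ≠ j → f i = f j → T f = 0)
    (hT_bdd : ∃ C : ℝ, ∀ f : Fin k → Lp ℝ p μ, ‖T f‖ ≤ C * ∏ i, ‖f i‖) :
    ∀ f : Fin k → Lp ℝ p μ, T f = 0 := by
  obtain ⟨C, hC⟩ := hT_bdd
  have : Nontrivial (Fin k) := Fin.nontrivial_iff_two_le.mpr hk
  have hA_zero (lam : X → ℝ) : A lam 0 = 0 := (AddMonoidHom.mk' (A lam) (hA_add lam)).map_zero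
  refine eq_zero_of_dense_of_continuous_update (continuous_update_of_bound hT_add hC)
    (Lp.simpleFunc.dense hp') fun f hf => ?_
  obtain ⟨χ, hχ⟩ := Lp.exists_common_factor_of_mem_simpleFunc
    (zero_lt_one.trans_le Fact.out).ne' hp' hf
  exact eq_zero_of_forall_ae_eq_mul hA_zero hT_smul hT_alt hχ

/-- Let `1 ≤ p < ∞`, `k ≥ 2`, and let `N` be a Banach space which is an `L^∞(μ)`-module
(the module action is encoded by a map `A` sending an essentially bounded function to an
operator on `N`, compatible with a.e. equality, additive, multiplicative, unital and
norm-bounded).  Then every bounded alternating `L^∞(μ)`-multilinear map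
`T : (L^p(μ))^k → N` is identically zero. -/
theorem stmt6 {X : Type*} [MeasurableSpace X] (μ : Measure X)
    (p : ℝ≥0∞) [Fact (1 ≤ p)] (hp' : p ≠ ∞) (k : ℕ) (hk : 2 ≤ k)
    {N : Type*} [NormedAddCommGroup N] [NormedSpace ℝ N] [CompleteSpace N]
    -- the `L^∞(μ)`-module structure on `N`:
    (A : (X → ℝ) → N → N)
    (hA_ae : ∀ lam lam' : X → ℝ, lam =ᵐ[μ] lam' → A lam = A lam')
    (hA_addfun : ∀ lam lam' : X → ℝ, ∀ n, A (lam + lam') n = A lam n + A lam' n)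
    (hA_add : ∀ lam : X → ℝ, ∀ n m, A lam (n + m) = A lam n + A lam m)
    (hA_mul : ∀ lam lam' : X → ℝ, ∀ n, A (lam * lam') n = A lam (A lam' n))
    (hA_one : ∀ n, A (fun _ => (1 : ℝ)) n = n)
    (hA_bdd : ∀ lam : X → ℝ, MemLp lam ∞ μ →
      ∀ n, ‖A lam n‖ ≤ (eLpNorm lam ∞ μ).toReal * ‖n‖)
    -- the alternating `L^∞(μ)`-multilinear map:
    (T : (Fin k → Lp ℝ p μ) → N)
    (hT_add : ∀ (f : Fin k → Lp ℝ p μ) (i : Fin k) (g h : Lp ℝ p μ),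
      T (Function.update f i (g + h)) =
        T (Function.update f i g) + T (Function.update f i h))
    (hT_smul : ∀ (f : Fin k → Lp ℝ p μ) (i : Fin k) (lam : X → ℝ), MemLp lam ∞ μ →
      ∀ g : Lp ℝ p μ, (⇑g : X → ℝ) =ᵐ[μ] (fun x => lam x * (f i : X → ℝ) x) →
      T (Function.update f i g) = A lam (T f))
    (hT_alt : ∀ (f : Fin k → Lp ℝ p μ) (i j : Fin k), i ≠ j → f i = f j → T f = 0)
    (hT_bdd : ∃ C : ℝ, ∀ f : Fin k → Lp ℝ p μ, ‖T f‖ ≤ C * ∏ i, ‖f i‖) :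
    ∀ f : Fin k → Lp ℝ p μ, T f = 0 :=
  stmt6_general μ p hp' k hk A hA_add T hT_add hT_smul hT_alt hT_bdd
end

section
/- Let $\mu = \sum_{n} c_n \delta_{p_n}$ be a countable sum of Dirac masses with $c_n > 0$ at distinct points $p_n$, and let $1 \leq p < \infty$. Then every bounded $L^\infty(\mu)$-module homomorphism $\varphi : L^p(\mu) \to L^\infty(\mu)$ is of the form $\varphi(f) = \sum_n f(p_n) \lambda_n \chi_{\{p_n\}}$ for a unique real sequence $(\lambda_n)$ with $\sup_n |\lambda_n| c_n^{-1/p} < \infty$; conversely every such sequence defines a bounded homomorphism, and the operator norm of $\varphi$ equals $\sup_n |\lambda_n| c_n^{-1/p}$. -/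
open MeasureTheory
open scoped ENNReal

/-- The `L^∞(μ)`-module homomorphism property for a bounded linear map
`φ : L^p(μ) → L^∞(μ)`, expressed pointwise. -/
def IsLinftyModuleHom {X : Type*} [MeasurableSpace X] (μ : Measure X)
    (p : ℝ≥0∞) [Fact (1 ≤ p)] (φ : Lp ℝ p μ →L[ℝ] Lp ℝ ∞ μ) : Prop :=
  ∀ lam0 : X → ℝ, MemLp lam0 ∞ μ → ∀ f g : Lp ℝ p μ,
    (⇑g : X → ℝ) =ᵐ[μ] (fun x => lam0 x * (f : X → ℝ) x) →
    (⇑(φ g) : X → ℝ) =ᵐ[μ] fun x => lam0 x * (φ f : X → ℝ) x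

/-- The representation of `φ` by the sequence `lam`:
`φ(f) = ∑ₙ f(pₙ) λₙ χ_{pₙ}` almost everywhere. -/
def RepresentedBy {X : Type*} [MeasurableSpace X] (μ : Measure X)
    (p : ℝ≥0∞) [Fact (1 ≤ p)] (pt : ℕ → X)
    (φ : Lp ℝ p μ →L[ℝ] Lp ℝ ∞ μ) (lam : ℕ → ℝ) : Prop :=
  ∀ f : Lp ℝ p μ,
    (⇑(φ f) : X → ℝ) =ᵐ[μ]
      fun x => ∑' n, (f : X → ℝ) (pt n) * lam n *
        Set.indicator {pt n} (fun _ => (1 : ℝ)) x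

/-! Since `μ` is carried by the atoms `pₙ`, each of positive mass, two functions agree
`μ`-a.e. iff they agree at every `pₙ`, and every `f ∈ Lᵖ(μ)` satisfies
`|f(pₙ)| cₙ^{1/p} ≤ ‖f‖ₚ`, with equality for the indicator `χₙ` of `{pₙ}`. A module
homomorphism `φ` commutes with multiplication by `χₘ`, and `χₘ f = f(pₘ) χₘ`, so
`φ(f)(pₘ) = f(pₘ) λₘ` with `λₘ = φ(χₘ)(pₘ)`. Testing `φ` on `χₙ` gives
`|λₙ| cₙ^{-1/p} ≤ ‖φ‖`, and the pointwise bound gives the reverse inequality; the same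
bound shows that every sequence with finite supremum defines such a `φ`. -/

section DiracSum

variable {X ι : Type*} [MeasurableSpace X] [MeasurableSingletonClass X] {x : ι → X}
  {a : ι → ℝ≥0∞}

theorem ae_sum_smul_dirac_iff [Countable ι] (ha : ∀ i, a i ≠ 0) {P : X → Prop} :
    (∀ᵐ y ∂Measure.sum fun i => a i • Measure.dirac (x i), P y) ↔ ∀ i, P (x i) := by
  simp only [Measure.ae_sum_iff, Measure.ae_ennreal_smul_measure_iff (ha _), ae_dirac_eq,
    Filter.eventually_pure]

theorem aestronglyMeasurable_sum_smul_dirac [Countable ι] {β : Type*} [TopologicalSpace β]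
    [TopologicalSpace.PseudoMetrizableSpace β] (f : X → β) :
    AEStronglyMeasurable f (Measure.sum fun i => a i • Measure.dirac (x i)) :=
  aestronglyMeasurable_sum_measure_iff.2 fun i => aestronglyMeasurable_dirac.smul_measure (a i)

theorem MeasureTheory.Measure.sum_smul_dirac_comp_singleton (hx : Function.Injective x) (i : ι) :
    (Measure.sum fun j => a j • Measure.dirac (x j)) {x i} = a i := by
  rw [Measure.sum_apply _ (measurableSet_singleton _)]
  simp +contextual [tsum_eq_single i, hx.eq_iff]

end DiracSum

section PointEvaluation

variable {α E : Type*} [MeasurableSpace α] [MeasurableSingletonClass α] [NormedAddCommGroup E]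
  {μ : Measure α} {p : ℝ≥0∞}

theorem enorm_mul_measure_singleton_rpow_le_eLpNorm (hp0 : p ≠ 0) (hp : p ≠ ∞) (f : α → E)
    (y : α) : ‖f y‖ₑ * μ {y} ^ (1 / p).toReal ≤ eLpNorm f p μ :=
  calc ‖f y‖ₑ * μ {y} ^ (1 / p).toReal = eLpNorm f p (μ.restrict {y}) := by
        rw [Measure.restrict_singleton, eLpNorm_smul_measure_of_ne_top hp, eLpNorm_dirac _ _ hp0,
          smul_eq_mul, mul_comm]
    _ ≤ eLpNorm f p μ := eLpNorm_restrict_le _ _ _ _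

theorem MeasureTheory.Lp.norm_apply_mul_measureReal_singleton_rpow_le (hp0 : p ≠ 0)
    (hp : p ≠ ∞) (f : Lp E p μ) (y : α) : ‖f y‖ * μ.real {y} ^ (1 / p.toReal) ≤ ‖f‖ := by
  have h := ENNReal.toReal_mono (Lp.eLpNorm_ne_top f)
    (enorm_mul_measure_singleton_rpow_le_eLpNorm hp0 hp f y)
  rwa [ENNReal.toReal_mul, ← ENNReal.toReal_rpow, toReal_enorm, ENNReal.toReal_div,
    ENNReal.toReal_one, ← Lp.norm_def] at h

end PointEvaluation

theorem Real.mul_rpow_neg_le_iff {a b C r : ℝ} (hb : 0 < b) :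
    a * b ^ (-r) ≤ C ↔ a ≤ C * b ^ r := by
  rw [Real.rpow_neg hb.le, ← div_eq_mul_inv, div_le_iff₀ (Real.rpow_pos_of_pos hb r)]

section Atomic

variable {X : Type*} {pt : ℕ → X} {c : ℕ → ℝ}

noncomputable def atomSeries (pt : ℕ → X) (lam : ℕ → ℝ) (v : X → ℝ) : X → ℝ :=
  fun x => ∑' n, v (pt n) * lam n * Set.indicator {pt n} (fun _ => (1 : ℝ)) x

theorem atomSeries_apply_atom (hpt : Function.Injective pt) (lam : ℕ → ℝ) (v : X → ℝ) (m : ℕ) :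
    atomSeries pt lam v (pt m) = v (pt m) * lam m := by
  rw [atomSeries, tsum_eq_single m]
  · simp
  · intro n hn
    simp [hpt.ne hn.symm]

variable [MeasurableSpace X] [MeasurableSingletonClass X]

local notation "μ" => Measure.sum fun n => ENNReal.ofReal (c n) • Measure.dirac (pt n)

theorem ae_iff_forall_atom (hc : ∀ n, 0 < c n) {P : X → Prop} :
    (∀ᵐ y ∂μ, P y) ↔ ∀ n, P (pt n) :=
  ae_sum_smul_dirac_iff fun n => (ENNReal.ofReal_pos.2 (hc n)).ne'

theorem ae_eq_iff_forall_atom (hc : ∀ n, 0 < c n) {f g : X → ℝ} :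
    f =ᵐ[μ] g ↔ ∀ n, f (pt n) = g (pt n) :=
  ae_iff_forall_atom hc

theorem measure_singleton_atom_ne_top (hpt : Function.Injective pt) (n : ℕ) :
    μ {pt n} ≠ ∞ := by
  rw [Measure.sum_smul_dirac_comp_singleton hpt]
  exact ENNReal.ofReal_ne_top

theorem toReal_measure_singleton_atom (hpt : Function.Injective pt) (hc : ∀ n, 0 < c n) (n : ℕ) :
    (μ {pt n}).toReal = c n := by
  rw [Measure.sum_smul_dirac_comp_singleton hpt, ENNReal.toReal_ofReal (hc n).le]

theorem abs_apply_atom_le_norm_top (hc : ∀ n, 0 < c n) (g : Lp ℝ ∞ μ) (n : ℕ) :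
    |g (pt n)| ≤ ‖g‖ := by
  rw [Lp.norm_def, toReal_eLpNorm (Lp.aestronglyMeasurable g)]
  exact (ae_iff_forall_atom hc).1 (ae_le_lpNorm_exponent_top (Lp.memLp g)) n

theorem norm_top_le_of_forall_atom (hc : ∀ n, 0 < c n) {g : Lp ℝ ∞ μ} {C : ℝ} (hC : 0 ≤ C)
    (h : ∀ n, |g (pt n)| ≤ C) : ‖g‖ ≤ C := by
  rw [Lp.norm_def, eLpNorm_exponent_top]
  exact ENNReal.toReal_le_of_le_ofReal hC
    (eLpNormEssSup_le_of_ae_bound ((ae_iff_forall_atom hc).2 h))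

theorem add_apply_atom (hc : ∀ n, 0 < c n) {q : ℝ≥0∞} (f g : Lp ℝ q μ) (n : ℕ) :
    (f + g) (pt n) = f (pt n) + g (pt n) :=
  (ae_eq_iff_forall_atom hc).1 (Lp.coeFn_add f g) n

theorem smul_apply_atom (hc : ∀ n, 0 < c n) {q : ℝ≥0∞} (a : ℝ) (f : Lp ℝ q μ) (n : ℕ) :
    (a • f) (pt n) = a * f (pt n) :=
  (ae_eq_iff_forall_atom hc).1 (Lp.coeFn_smul a f) n

variable {p : ℝ≥0∞}

noncomputable def atomIndicator (hpt : Function.Injective pt) (n : ℕ) : Lp ℝ p μ :=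
  indicatorConstLp p (measurableSet_singleton (pt n)) (measure_singleton_atom_ne_top hpt n) 1

theorem atomIndicator_apply (hpt : Function.Injective pt) (hc : ∀ n, 0 < c n) (n m : ℕ) :
    (atomIndicator hpt n : Lp ℝ p μ) (pt m) = Set.indicator {pt n} (fun _ => 1) (pt m) :=
  (ae_eq_iff_forall_atom hc).1 indicatorConstLp_coeFn m

theorem atomIndicator_apply_self (hpt : Function.Injective pt) (hc : ∀ n, 0 < c n) (n : ℕ) :
    (atomIndicator hpt n : Lp ℝ p μ) (pt n) = 1 := by
  simp [atomIndicator_apply hpt hc]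

variable [Fact (1 ≤ p)]

theorem norm_atomIndicator (hpt : Function.Injective pt) (hc : ∀ n, 0 < c n) (hp : p ≠ ∞)
    (n : ℕ) : ‖(atomIndicator hpt n : Lp ℝ p μ)‖ = c n ^ (1 / p.toReal) := by
  rw [atomIndicator, norm_indicatorConstLp (zero_lt_one.trans_le Fact.out).ne' hp,
    measureReal_def, toReal_measure_singleton_atom hpt hc, norm_one, one_mul]

theorem abs_apply_atom_mul_rpow_le_norm (hpt : Function.Injective pt) (hc : ∀ n, 0 < c n)
    (hp : p ≠ ∞) (f : Lp ℝ p μ) (n : ℕ) : |f (pt n)| * c n ^ (1 / p.toReal) ≤ ‖f‖ := by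
  have h := Lp.norm_apply_mul_measureReal_singleton_rpow_le
    (zero_lt_one.trans_le Fact.out).ne' hp f (pt n)
  rwa [measureReal_def, toReal_measure_singleton_atom hpt hc, Real.norm_eq_abs] at h

theorem nonneg_of_forall_abs_mul_rpow_le (hc : ∀ n, 0 < c n) {lam : ℕ → ℝ} {r C : ℝ}
    (hC : ∀ n, |lam n| * c n ^ r ≤ C) : 0 ≤ C :=
  (mul_nonneg (abs_nonneg _) (Real.rpow_nonneg (hc 0).le _)).trans (hC 0)

theorem abs_apply_atom_mul_le_mul_norm (hpt : Function.Injective pt) (hc : ∀ n, 0 < c n)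
    (hp : p ≠ ∞) {lam : ℕ → ℝ} {C : ℝ} (hC : ∀ n, |lam n| * c n ^ (-(1 / p.toReal)) ≤ C)
    (f : Lp ℝ p μ) (n : ℕ) : |f (pt n) * lam n| ≤ C * ‖f‖ := by
  have hlam : |lam n| ≤ C * c n ^ (1 / p.toReal) := (Real.mul_rpow_neg_le_iff (hc n)).1 (hC n)
  have hC0 : 0 ≤ C := nonneg_of_forall_abs_mul_rpow_le hc hC
  calc |f (pt n) * lam n| ≤ |f (pt n)| * (C * c n ^ (1 / p.toReal)) := by
        rw [abs_mul]; gcongr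
    _ = C * (|f (pt n)| * c n ^ (1 / p.toReal)) := by ring
    _ ≤ C * ‖f‖ := by gcongr; exact abs_apply_atom_mul_rpow_le_norm hpt hc hp f n

theorem representedBy_iff (hpt : Function.Injective pt) (hc : ∀ n, 0 < c n)
    {φ : Lp ℝ p μ →L[ℝ] Lp ℝ ∞ μ} {lam : ℕ → ℝ} :
    RepresentedBy μ p pt φ lam ↔ ∀ f m, φ f (pt m) = f (pt m) * lam m := by
  refine forall_congr' fun f => ?_
  change _ =ᵐ[_] atomSeries pt lam f ↔ _
  rw [ae_eq_iff_forall_atom hc]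
  simp only [atomSeries_apply_atom hpt]

namespace RepresentedBy

theorem apply_atom (hpt : Function.Injective pt) (hc : ∀ n, 0 < c n)
    {φ : Lp ℝ p μ →L[ℝ] Lp ℝ ∞ μ} {lam : ℕ → ℝ}
    (hφ : RepresentedBy μ p pt φ lam) (f : Lp ℝ p μ) (m : ℕ) :
    φ f (pt m) = f (pt m) * lam m :=
  (representedBy_iff hpt hc).1 hφ f m

theorem eq_apply_atomIndicator (hpt : Function.Injective pt) (hc : ∀ n, 0 < c n)
    {φ : Lp ℝ p μ →L[ℝ] Lp ℝ ∞ μ} {lam : ℕ → ℝ}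
    (hφ : RepresentedBy μ p pt φ lam) (n : ℕ) : lam n = φ (atomIndicator hpt n) (pt n) := by
  rw [hφ.apply_atom hpt hc, atomIndicator_apply_self hpt hc, one_mul]

theorem unique (hpt : Function.Injective pt) (hc : ∀ n, 0 < c n)
    {φ : Lp ℝ p μ →L[ℝ] Lp ℝ ∞ μ} {lam lam' : ℕ → ℝ}
    (hφ : RepresentedBy μ p pt φ lam) (hφ' : RepresentedBy μ p pt φ lam') : lam = lam' :=
  funext fun n =>
    (hφ.eq_apply_atomIndicator hpt hc n).trans (hφ'.eq_apply_atomIndicator hpt hc n).symm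

theorem abs_mul_rpow_neg_le_opNorm (hpt : Function.Injective pt) (hc : ∀ n, 0 < c n)
    (hp : p ≠ ∞) {φ : Lp ℝ p μ →L[ℝ] Lp ℝ ∞ μ} {lam : ℕ → ℝ}
    (hφ : RepresentedBy μ p pt φ lam) (n : ℕ) :
    |lam n| * c n ^ (-(1 / p.toReal)) ≤ ‖φ‖ := by
  rw [Real.mul_rpow_neg_le_iff (hc n), hφ.eq_apply_atomIndicator hpt hc n,
    ← norm_atomIndicator hpt hc hp n]
  exact (abs_apply_atom_le_norm_top hc _ n).trans (φ.le_opNorm _)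

theorem opNorm_le (hpt : Function.Injective pt) (hc : ∀ n, 0 < c n) (hp : p ≠ ∞)
    {φ : Lp ℝ p μ →L[ℝ] Lp ℝ ∞ μ} {lam : ℕ → ℝ}
    (hφ : RepresentedBy μ p pt φ lam) {C : ℝ}
    (hC : ∀ n, |lam n| * c n ^ (-(1 / p.toReal)) ≤ C) : ‖φ‖ ≤ C := by
  have hC0 : 0 ≤ C := nonneg_of_forall_abs_mul_rpow_le hc hC
  refine φ.opNorm_le_bound hC0 fun f => norm_top_le_of_forall_atom hc (by positivity) fun n => ?_
  rw [hφ.apply_atom hpt hc]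
  exact abs_apply_atom_mul_le_mul_norm hpt hc hp hC f n

theorem isLUB_opNorm (hpt : Function.Injective pt) (hc : ∀ n, 0 < c n) (hp : p ≠ ∞)
    {φ : Lp ℝ p μ →L[ℝ] Lp ℝ ∞ μ} {lam : ℕ → ℝ}
    (hφ : RepresentedBy μ p pt φ lam) :
    IsLUB (Set.range fun n => |lam n| * c n ^ (-(1 / p.toReal))) ‖φ‖ :=
  ⟨Set.forall_mem_range.2 (hφ.abs_mul_rpow_neg_le_opNorm hpt hc hp),
    fun _ hC => hφ.opNorm_le hpt hc hp fun n => hC ⟨n, rfl⟩⟩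

theorem isLinftyModuleHom (hpt : Function.Injective pt) (hc : ∀ n, 0 < c n)
    {φ : Lp ℝ p μ →L[ℝ] Lp ℝ ∞ μ} {lam : ℕ → ℝ}
    (hφ : RepresentedBy μ p pt φ lam) : IsLinftyModuleHom μ p φ := by
  intro w _ f g hg
  rw [ae_eq_iff_forall_atom hc] at hg ⊢
  intro n
  rw [hφ.apply_atom hpt hc, hφ.apply_atom hpt hc, hg n, mul_assoc]

end RepresentedBy

theorem IsLinftyModuleHom.representedBy (hpt : Function.Injective pt) (hc : ∀ n, 0 < c n)
    {φ : Lp ℝ p μ →L[ℝ] Lp ℝ ∞ μ} (hφ : IsLinftyModuleHom μ p φ) :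
    RepresentedBy μ p pt φ fun n => φ (atomIndicator hpt n) (pt n) := by
  refine (representedBy_iff hpt hc).2 fun f m => ?_
  have hind : MemLp (Set.indicator {pt m} fun _ => (1 : ℝ)) ∞ μ :=
    memLp_indicator_const ∞ (measurableSet_singleton _) 1
      (Or.inr (measure_singleton_atom_ne_top hpt m))
  have hmul : ⇑(f (pt m) • (atomIndicator hpt m : Lp ℝ p μ)) =ᵐ[μ]
      fun x => Set.indicator {pt m} (fun _ => (1 : ℝ)) x * f x := by
    refine (ae_eq_iff_forall_atom hc).2 fun k => ?_
    rw [smul_apply_atom hc, atomIndicator_apply hpt hc]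
    by_cases hk : pt k = pt m <;> simp [hk]
  have h := (ae_eq_iff_forall_atom hc).1 (hφ _ hind f _ hmul) m
  rw [map_smul, smul_apply_atom hc, Set.indicator_of_mem (Set.mem_singleton _), one_mul] at h
  rw [← h, mul_comm]

theorem memLp_top_atomSeries (hpt : Function.Injective pt) (hc : ∀ n, 0 < c n) (hp : p ≠ ∞)
    {lam : ℕ → ℝ} {C : ℝ} (hC : ∀ n, |lam n| * c n ^ (-(1 / p.toReal)) ≤ C) (f : Lp ℝ p μ) :
    MemLp (atomSeries pt lam f) ∞ μ :=
  memLp_top_of_bound (aestronglyMeasurable_sum_smul_dirac _) (C * ‖f‖)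
    ((ae_iff_forall_atom hc).2 fun n => by
      rw [Real.norm_eq_abs, atomSeries_apply_atom hpt]
      exact abs_apply_atom_mul_le_mul_norm hpt hc hp hC f n)

noncomputable def atomDiagonal (hpt : Function.Injective pt) (hc : ∀ n, 0 < c n) (hp : p ≠ ∞)
    (lam : ℕ → ℝ) {C : ℝ} (hC : ∀ n, |lam n| * c n ^ (-(1 / p.toReal)) ≤ C) :
    Lp ℝ p μ →L[ℝ] Lp ℝ ∞ μ :=
  LinearMap.mkContinuous
    { toFun := fun f => (memLp_top_atomSeries hpt hc hp hC f).toLp _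
      map_add' := fun f g => by
        rw [← MemLp.toLp_add]
        refine MemLp.toLp_congr _ _ ((ae_eq_iff_forall_atom hc).2 fun n => ?_)
        simp only [Pi.add_apply, atomSeries_apply_atom hpt, add_apply_atom hc, add_mul]
      map_smul' := fun a f => by
        rw [RingHom.id_apply, ← MemLp.toLp_const_smul]
        refine MemLp.toLp_congr _ _ ((ae_eq_iff_forall_atom hc).2 fun n => ?_)
        simp only [Pi.smul_apply, smul_eq_mul, atomSeries_apply_atom hpt, smul_apply_atom hc,
          mul_assoc] }
    C fun f => norm_top_le_of_forall_atom hc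
      (mul_nonneg (nonneg_of_forall_abs_mul_rpow_le hc hC) (norm_nonneg f)) fun n => by
        rw [LinearMap.coe_mk, AddHom.coe_mk, (ae_eq_iff_forall_atom hc).1 (MemLp.coeFn_toLp _) n,
          atomSeries_apply_atom hpt]
        exact abs_apply_atom_mul_le_mul_norm hpt hc hp hC f n

theorem representedBy_atomDiagonal (hpt : Function.Injective pt) (hc : ∀ n, 0 < c n)
    (hp : p ≠ ∞) {lam : ℕ → ℝ} {C : ℝ} (hC : ∀ n, |lam n| * c n ^ (-(1 / p.toReal)) ≤ C) :
    RepresentedBy μ p pt (atomDiagonal hpt hc hp lam hC) lam :=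
  fun f => MemLp.coeFn_toLp (memLp_top_atomSeries hpt hc hp hC f)

end Atomic

/-- For a countable sum of Dirac masses `μ = ∑ cₙ δ_{pₙ}` with `cₙ > 0` and `1 ≤ p < ∞`,
every bounded `L^∞(μ)`-module homomorphism `φ : L^p(μ) → L^∞(μ)` is represented by a unique
sequence `(λₙ)` with `supₙ |λₙ| cₙ^{-1/p} < ∞`, the operator norm of `φ` being exactly this
supremum; conversely, every such sequence defines a bounded module homomorphism. -/
theorem stmt7 {X : Type*} [MeasurableSpace X] [MeasurableSingletonClass X]
    (pt : ℕ → X) (hpt : Function.Injective pt)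
    (c : ℕ → ℝ) (hc : ∀ n, 0 < c n)
    (μ : Measure X)
    (hμ : μ = Measure.sum fun n => ENNReal.ofReal (c n) • Measure.dirac (pt n))
    (p : ℝ≥0∞) [Fact (1 ≤ p)] (hp' : p ≠ ∞) :
    (∀ φ : Lp ℝ p μ →L[ℝ] Lp ℝ ∞ μ, IsLinftyModuleHom μ p φ →
      ∃! lam : ℕ → ℝ,
        (∃ C : ℝ, ∀ n, |lam n| * c n ^ (-(1 / p.toReal)) ≤ C) ∧
        RepresentedBy μ p pt φ lam ∧
        IsLUB (Set.range fun n => |lam n| * c n ^ (-(1 / p.toReal))) ‖φ‖) ∧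
    (∀ lam : ℕ → ℝ, (∃ C : ℝ, ∀ n, |lam n| * c n ^ (-(1 / p.toReal)) ≤ C) →
      ∃ φ : Lp ℝ p μ →L[ℝ] Lp ℝ ∞ μ, IsLinftyModuleHom μ p φ ∧
        RepresentedBy μ p pt φ lam ∧
        IsLUB (Set.range fun n => |lam n| * c n ^ (-(1 / p.toReal))) ‖φ‖) := by
  subst hμ
  refine ⟨fun φ hφ => ?_, fun lam ⟨C, hC⟩ => ?_⟩
  · have hrep := hφ.representedBy hpt hc
    have hlub := hrep.isLUB_opNorm hpt hc hp'
    exact ⟨_, ⟨⟨‖φ‖, fun n => hlub.1 ⟨n, rfl⟩⟩, hrep, hlub⟩,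
      fun lam ⟨_, hrep', _⟩ => hrep'.unique hpt hc hrep⟩
  · have hrep := representedBy_atomDiagonal hpt hc hp' hC
    exact ⟨_, hrep.isLinftyModuleHom hpt hc, hrep, hrep.isLUB_opNorm hpt hc hp'⟩
end

section
/- Let $(X,d)$ be a metric space, $K \subseteq \mathbb{R}$ compact, and $\gamma : K \to X$ a Lipschitz map. If $K_0 \subseteq K$ is a measurable set on which the metric differential of $\gamma$ exists and equals $0$ at every point (i.e. $\lim_{K \ni t' \to t} d(\gamma(t'),\gamma(t))/|t'-t| = 0$ for all $t \in K_0$), then the $1$-dimensional Hausdorff measure of the image satisfies $\mathcal{H}^1(\gamma(K_0)) = 0$. -/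
/-!
Where the metric differential vanishes, `γ` is, for each `ε > 0`, locally `ε`-Lipschitz at scale
`1/(n+1)` on an increasing sequence of sets exhausting `K₀`. Cutting such a set into pieces of
length `1/(n+1)`, on each of which `γ` is globally `ε`-Lipschitz, gives `ℋ¹(γ(K₀)) ≤ ε |K₀|`,
and `|K₀| ≤ |K| < ∞` because `K` is compact.
-/

open MeasureTheory Filter Set Function
open scoped Topology NNReal ENNReal

theorem MeasureTheory.tsum_measure_inter_le_of_pairwise_disjoint {α ι : Type*}
    [MeasurableSpace α] [Countable ι] (μ : Measure α) (s : Set α) {A : ι → Set α}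
    (hA : ∀ i, MeasurableSet (A i)) (hd : Pairwise (Disjoint on A)) :
    ∑' i, μ (s ∩ A i) ≤ μ s :=
  calc ∑' i, μ (s ∩ A i) = ∑' i, μ.restrict (A i) s := by
        simp only [Measure.restrict_apply' (hA _)]
    _ = μ.restrict (⋃ i, A i) s := by
        rw [Measure.restrict_iUnion hd hA, Measure.sum_apply_of_countable]
    _ ≤ μ s := Measure.restrict_apply_le _ _

theorem eventually_dist_le_mul_of_tendsto_dist_div_zero {X : Type*} [PseudoMetricSpace X]
    {f : ℝ → X} {s : Set ℝ} {t : ℝ}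
    (h : Tendsto (fun t' => dist (f t') (f t) / |t' - t|) (𝓝[s \ {t}] t) (𝓝 0))
    {ε : ℝ} (hε : 0 < ε) : ∀ᶠ t' in 𝓝[s] t, dist (f t') (f t) ≤ ε * dist t' t := by
  have hlt := eventually_nhdsWithin_iff.1 (h.eventually_lt_const hε)
  refine eventually_nhdsWithin_iff.2 (hlt.mono fun t' ht' ht's => ?_)
  rcases eq_or_ne t' t with rfl | hne
  · simp
  · have hpos : 0 < dist t' t := dist_pos.2 hne
    rw [Real.dist_eq] at hpos ⊢
    exact ((div_lt_iff₀ hpos).1 (ht' ⟨ht's, hne⟩)).le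

section

variable {X : Type*} [MetricSpace X] [MeasurableSpace X] [BorelSpace X]

theorem hausdorffMeasure_one_image_le_of_dist_le {f : ℝ → X} {s : Set ℝ} {ε : ℝ≥0} {δ : ℝ}
    (hδ : 0 < δ) (hf : ∀ x ∈ s, ∀ y ∈ s, dist x y ≤ δ → dist (f x) (f y) ≤ ε * dist x y) :
    μH[1] (f '' s) ≤ ε * volume s := by
  set P : ℤ → Set ℝ := fun k => s ∩ Ico (k • δ) ((k + 1) • δ)
  have hcover : f '' s = ⋃ k, f '' P k := by
    rw [← image_iUnion, ← inter_iUnion, iUnion_Ico_zsmul hδ, inter_univ]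
  have hlip : ∀ k, LipschitzOnWith ε f (P k) := fun k =>
    LipschitzOnWith.of_dist_le_mul fun x ⟨hxs, hx⟩ y ⟨hys, hy⟩ => by
      refine hf x hxs y hys ?_
      simp only [mem_Ico, zsmul_eq_mul, Int.cast_add, Int.cast_one] at hx hy
      rw [Real.dist_eq, abs_sub_le_iff]
      constructor <;> nlinarith
  calc μH[1] (f '' s) ≤ ∑' k, μH[1] (f '' P k) := hcover ▸ measure_iUnion_le _
    _ ≤ ∑' k, ε * volume (P k) := ENNReal.tsum_le_tsum fun k => by
        simpa [ENNReal.rpow_one, hausdorffMeasure_real] using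
          (hlip k).hausdorffMeasure_image_le zero_le_one
    _ = ε * ∑' k, volume (P k) := ENNReal.tsum_mul_left
    _ ≤ ε * volume s := by
        gcongr
        exact tsum_measure_inter_le_of_pairwise_disjoint _ _ (fun _ => measurableSet_Ico)
          (by simpa only [zero_add] using pairwise_disjoint_Ico_add_zsmul (0 : ℝ) δ)

theorem hausdorffMeasure_one_image_le_of_eventually_dist_le {f : ℝ → X} {s : Set ℝ} {ε : ℝ≥0}
    (hf : ∀ t ∈ s, ∀ᶠ t' in 𝓝[s] t, dist (f t') (f t) ≤ ε * dist t' t) :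
    μH[1] (f '' s) ≤ ε * volume s := by
  set E : ℕ → Set ℝ := fun n =>
    {t ∈ s | ∀ t' ∈ s, dist t' t ≤ 1 / (n + 1) → dist (f t') (f t) ≤ ε * dist t' t}
  have hmono : Monotone E := fun m n hmn t ⟨hts, ht⟩ =>
    ⟨hts, fun t' ht's h => ht t' ht's (h.trans (Nat.one_div_le_one_div hmn))⟩
  have hunion : ⋃ n, E n = s := by
    refine (iUnion_subset fun n => sep_subset _ _).antisymm fun t ht => ?_
    obtain ⟨δ, hδ, hδt⟩ := Metric.eventually_nhds_iff.1 (eventually_nhdsWithin_iff.1 (hf t ht))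
    obtain ⟨n, hn⟩ := exists_nat_one_div_lt hδ
    exact mem_iUnion.2 ⟨n, ht, fun t' ht's h => hδt (h.trans_lt hn) ht's⟩
  have hE : ∀ n, μH[1] (f '' E n) ≤ ε * volume s := fun n =>
    (hausdorffMeasure_one_image_le_of_dist_le (s := E n) Nat.one_div_pos_of_nat
      fun x hx y hy hxy => hy.2 x hx.1 hxy).trans (by gcongr; exact sep_subset _ _)
  have hmono_image : Monotone fun n => f '' E n := fun _ _ hmn => image_mono (hmono hmn)
  rw [← hunion, image_iUnion, hmono_image.directed_le.measure_iUnion, hunion]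
  exact iSup_le hE

end

theorem stmt17_general {X : Type*} [MetricSpace X] [MeasurableSpace X] [BorelSpace X]
    (K : Set ℝ) (hKc : IsCompact K) (γ : ℝ → X)
    (K₀ : Set ℝ) (hK₀ : K₀ ⊆ K)
    (hmd : ∀ t ∈ K₀,
      Tendsto (fun t' => dist (γ t') (γ t) / |t' - t|) (𝓝[K \ {t}] t) (𝓝 0)) :
    Measure.hausdorffMeasure (X := X) 1 (γ '' K₀) = 0 := by
  have hfin : volume K₀ ≠ ∞ := ((measure_mono hK₀).trans_lt hKc.measure_lt_top).ne
  have hle (ε : ℝ≥0) (hε : 0 < ε) : μH[1] (γ '' K₀) ≤ ε * volume K₀ :=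
    hausdorffMeasure_one_image_le_of_eventually_dist_le fun t ht =>
      nhdsWithin_mono t hK₀ (eventually_dist_le_mul_of_tendsto_dist_div_zero (hmd t ht) hε)
  by_contra hne
  obtain ⟨ε, hε, hlt⟩ := ENNReal.exists_nnreal_pos_mul_lt hfin hne
  exact (hle ε hε).not_gt hlt

/-- If `γ : ℝ → X` is Lipschitz on a compact set `K ⊆ ℝ` and its metric differential exists
and vanishes at every point of a measurable subset `K₀ ⊆ K`, then the image `γ(K₀)` is
`ℋ¹`-null. -/
theorem stmt17 {X : Type*} [MetricSpace X] [MeasurableSpace X] [BorelSpace X]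
    (K : Set ℝ) (hKc : IsCompact K) (L : ℝ≥0) (γ : ℝ → X)
    (hγ : LipschitzOnWith L γ K)
    (K₀ : Set ℝ) (hK₀ : K₀ ⊆ K) (hK₀m : MeasurableSet K₀)
    (hmd : ∀ t ∈ K₀,
      Tendsto (fun t' => dist (γ t') (γ t) / |t' - t|) (𝓝[K \ {t}] t) (𝓝 0)) :
    Measure.hausdorffMeasure (X := X) 1 (γ '' K₀) = 0 :=
  stmt17_general K hKc γ K₀ hK₀ hmd
end

section
/- Let $\mu$ be a finite measure, and let $M$ and $N$ be Banach spaces that are $L^\infty(\mu)$-modules, with $N$ an $L^\infty(\mu)$-normed module (i.e. $\|n\|_N = \max(\|\chi_U n\|_N, \|\chi_{U^c} n\|_N)$ for every measurable $U$ and $n \in N$). Then the Banach space $\mathrm{Alt}^k(M,N)$ of bounded alternating $L^\infty(\mu)$-multilinear maps $M^k \to N$, with the action $(\lambda\varphi)(m_1,\dots,m_k) = \varphi(\lambda m_1, m_2,\dots,m_k)$, satisfies $\|\varphi\|_{\mathrm{Alt}^k(M,N)} = \max\big(\|\chi_U \varphi\|_{\mathrm{Alt}^k(M,N)}, \|\chi_{U^c}\varphi\|_{\mathrm{Alt}^k(M,N)}\big)$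 for every measurable set $U$. -/
open MeasureTheory
open scoped ENNReal

/-! Multiplying by `χ_U` in the first slot is the same as multiplying the value by `χ_U`
(`L^∞`-linearity), so the claim reduces to the pointwise identity `‖φ m‖ = max ‖χ_U φ m‖ ‖χ_Uᶜ φ m‖`
in `N`; the supremum of a pointwise maximum of two bounded families is the maximum of their suprema. -/

noncomputable def altNorm {M N : Type*} [NormedAddCommGroup M] [NormedAddCommGroup N]
    {k : ℕ} (φ : (Fin k → M) → N) : ℝ :=
  sSup {r : ℝ | ∃ m : Fin k → M, (∀ i, ‖m i‖ ≤ 1) ∧ r = ‖φ m‖}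

section altNorm

variable {k : ℕ} {M N N₁ N₂ : Type*} [NormedAddCommGroup M] [NormedAddCommGroup N]
  [NormedAddCommGroup N₁] [NormedAddCommGroup N₂]

theorem altNorm_eq_iSup (φ : (Fin k → M) → N) :
    altNorm φ = ⨆ m : {m : Fin k → M // ∀ i, ‖m i‖ ≤ 1}, ‖φ m‖ := by
  unfold altNorm iSup
  congr 1
  ext r
  constructor
  · rintro ⟨m, hm, rfl⟩
    exact ⟨⟨m, hm⟩, rfl⟩
  · rintro ⟨⟨m, hm⟩, rfl⟩
    exact ⟨m, hm, rfl⟩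

theorem bddAbove_range_norm_of_norm_le_mul_prod {φ : (Fin k → M) → N} {C : ℝ}
    (hC : ∀ m, ‖φ m‖ ≤ C * ∏ i, ‖m i‖) :
    BddAbove (Set.range fun m : {m : Fin k → M // ∀ i, ‖m i‖ ≤ 1} => ‖φ m‖) := by
  refine ⟨max C 0, ?_⟩
  rintro _ ⟨⟨m, hm⟩, rfl⟩
  have hprod_nonneg : 0 ≤ ∏ i, ‖m i‖ := Finset.prod_nonneg fun i _ => norm_nonneg _
  have hprod_le_one : ∏ i, ‖m i‖ ≤ 1 :=
    Finset.prod_le_one (fun i _ => norm_nonneg _) fun i _ => hm i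
  calc ‖φ m‖ ≤ C * ∏ i, ‖m i‖ := hC m
    _ ≤ max C 0 * ∏ i, ‖m i‖ := by gcongr; exact le_max_left _ _
    _ ≤ max C 0 := mul_le_of_le_one_right (le_max_right _ _) hprod_le_one

theorem altNorm_eq_max_of_norm_eq_max {φ : (Fin k → M) → N} {ψ₁ : (Fin k → M) → N₁}
    {ψ₂ : (Fin k → M) → N₂} (h : ∀ m, ‖φ m‖ = max ‖ψ₁ m‖ ‖ψ₂ m‖)
    (hφ : BddAbove (Set.range fun m : {m : Fin k → M // ∀ i, ‖m i‖ ≤ 1} => ‖φ m‖)) :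
    altNorm φ = max (altNorm ψ₁) (altNorm ψ₂) := by
  have hψ₁ : BddAbove (Set.range fun m : {m : Fin k → M // ∀ i, ‖m i‖ ≤ 1} => ‖ψ₁ m‖) :=
    hφ.range_mono _ fun m => (h m).symm ▸ le_max_left _ _
  have hψ₂ : BddAbove (Set.range fun m : {m : Fin k → M // ∀ i, ‖m i‖ ≤ 1} => ‖ψ₂ m‖) :=
    hφ.range_mono _ fun m => (h m).symm ▸ le_max_right _ _
  simp only [altNorm_eq_iSup, h]
  exact ciSup_sup_eq hψ₁ hψ₂

end altNorm

theorem stmt19_general {X : Type*} [MeasurableSpace X] (μ : Measure X)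
    (k : ℕ) (hk : 0 < k)
    {M N : Type*} [NormedAddCommGroup M]
    [NormedAddCommGroup N]
    -- the `L^∞(μ)`-module structure on `M`:
    (sM : (X → ℝ) → M → M)
    -- the `L^∞(μ)`-module structure on `N`:
    (sN : (X → ℝ) → N → N)
    -- `N` is an `L^∞(μ)`-normed module:
    (hNnorm : ∀ U : Set X, MeasurableSet U → ∀ n : N,
      ‖n‖ = max ‖sN (U.indicator fun _ => (1 : ℝ)) n‖
              ‖sN (Uᶜ.indicator fun _ => (1 : ℝ)) n‖)
    -- `φ` is a bounded alternating `L^∞(μ)`-multilinear map `M^k → N`: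
    (φ : (Fin k → M) → N)
    (hsmul : ∀ (m : Fin k → M) (i : Fin k) (lam : X → ℝ), MemLp lam ∞ μ →
      φ (Function.update m i (sM lam (m i))) = sN lam (φ m))
    (hbdd : ∃ C : ℝ, ∀ m : Fin k → M, ‖φ m‖ ≤ C * ∏ i, ‖m i‖)
    (U : Set X) (hU : MeasurableSet U) :
    altNorm φ =
      max (altNorm fun m => φ (Function.update m ⟨0, hk⟩
            (sM (U.indicator fun _ => (1 : ℝ)) (m ⟨0, hk⟩))))
          (altNorm fun m => φ (Function.update m ⟨0, hk⟩
            (sM (Uᶜ.indicator fun _ => (1 : ℝ)) (m ⟨0, hk⟩)))) := by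
  obtain ⟨C, hC⟩ := hbdd
  have hχ : ∀ V : Set X, MeasurableSet V →
      (fun m => φ (Function.update m ⟨0, hk⟩ (sM (V.indicator fun _ => (1 : ℝ)) (m ⟨0, hk⟩))))
        = fun m => sN (V.indicator fun _ => (1 : ℝ)) (φ m) :=
    fun V hV => funext fun m => hsmul m _ _ ((memLp_top_const 1).indicator hV)
  rw [hχ U hU, hχ Uᶜ hU.compl]
  exact altNorm_eq_max_of_norm_eq_max (fun m => hNnorm U hU (φ m))
    (bddAbove_range_norm_of_norm_le_mul_prod hC)

/-- If `M` and `N` are Banach `L^∞(μ)`-modules (the actions being encoded by maps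
`sM`, `sN` indexed by essentially bounded functions) and `N` is `L^∞(μ)`-normed, then the
space of bounded alternating `L^∞(μ)`-multilinear maps `M^k → N` is `L^∞(μ)`-normed:
for every measurable `U`,
`‖φ‖ = max (‖χ_U φ‖, ‖χ_{Uᶜ} φ‖)` where `(χ_U φ)(m₁,…,m_k) = φ(χ_U m₁, m₂, …, m_k)`. -/
theorem stmt19 {X : Type*} [MeasurableSpace X] (μ : Measure X) [IsFiniteMeasure μ]
    (k : ℕ) (hk : 0 < k)
    {M N : Type*} [NormedAddCommGroup M] [NormedSpace ℝ M] [CompleteSpace M]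
    [NormedAddCommGroup N] [NormedSpace ℝ N] [CompleteSpace N]
    -- the `L^∞(μ)`-module structure on `M`:
    (sM : (X → ℝ) → M → M)
    (hsM_ae : ∀ lam lam' : X → ℝ, lam =ᵐ[μ] lam' → sM lam = sM lam')
    (hsM_add : ∀ lam : X → ℝ, ∀ m m', sM lam (m + m') = sM lam m + sM lam m')
    (hsM_mul : ∀ lam lam' : X → ℝ, ∀ m, sM (lam * lam') m = sM lam (sM lam' m))
    (hsM_one : ∀ m, sM (fun _ => (1 : ℝ)) m = m)
    (hsM_bdd : ∀ lam : X → ℝ, MemLp lam ∞ μ →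
      ∀ m, ‖sM lam m‖ ≤ (eLpNorm lam ∞ μ).toReal * ‖m‖)
    -- the `L^∞(μ)`-module structure on `N`:
    (sN : (X → ℝ) → N → N)
    (hsN_ae : ∀ lam lam' : X → ℝ, lam =ᵐ[μ] lam' → sN lam = sN lam')
    (hsN_add : ∀ lam : X → ℝ, ∀ n n', sN lam (n + n') = sN lam n + sN lam n')
    (hsN_mul : ∀ lam lam' : X → ℝ, ∀ n, sN (lam * lam') n = sN lam (sN lam' n))
    (hsN_one : ∀ n, sN (fun _ => (1 : ℝ)) n = n)
    (hsN_bdd : ∀ lam : X → ℝ, MemLp lam ∞ μ →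
      ∀ n, ‖sN lam n‖ ≤ (eLpNorm lam ∞ μ).toReal * ‖n‖)
    -- `N` is an `L^∞(μ)`-normed module:
    (hNnorm : ∀ U : Set X, MeasurableSet U → ∀ n : N,
      ‖n‖ = max ‖sN (U.indicator fun _ => (1 : ℝ)) n‖
              ‖sN (Uᶜ.indicator fun _ => (1 : ℝ)) n‖)
    -- `φ` is a bounded alternating `L^∞(μ)`-multilinear map `M^k → N`:
    (φ : (Fin k → M) → N)
    (hadd : ∀ (m : Fin k → M) (i : Fin k) (g h : M),
      φ (Function.update m i (g + h)) =
        φ (Function.update m i g) + φ (Function.update m i h))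
    (hsmul : ∀ (m : Fin k → M) (i : Fin k) (lam : X → ℝ), MemLp lam ∞ μ →
      φ (Function.update m i (sM lam (m i))) = sN lam (φ m))
    (halt : ∀ (m : Fin k → M) (i j : Fin k), i ≠ j → m i = m j → φ m = 0)
    (hbdd : ∃ C : ℝ, ∀ m : Fin k → M, ‖φ m‖ ≤ C * ∏ i, ‖m i‖)
    (U : Set X) (hU : MeasurableSet U) :
    altNorm φ =
      max (altNorm fun m => φ (Function.update m ⟨0, hk⟩
            (sM (U.indicator fun _ => (1 : ℝ)) (m ⟨0, hk⟩))))
          (altNorm fun m => φ (Function.update m ⟨0, hk⟩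
            (sM (Uᶜ.indicator fun _ => (1 : ℝ)) (m ⟨0, hk⟩)))) :=
  stmt19_general μ k hk sM sN hNnorm φ hsmul hbdd U hU
end
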